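/- arXiv:1810.04042 — 2 statements merged into one kernel-verified Lean document; each statement's English description precedes it below -/
import Mathlib

section
/- Two m-ary trees of the same arity are equal if and only if their path sequences are equal, where the path sequence records for each leaf (in left-to-right order) the length of the path from the root to that leaf. -/
/-- An `m`-ary (rooted plane) tree: every node has either no children (a leaf)
or exactly `m` children (an internal node). -/
inductive MTree (m : ℕ) : Type
  | leaf : MTree m
  | node : (Fin m → MTree m) → MTree m

namespace MTree

variable {m : ℕ}

/-- The arity: the number of leaves. -/
def leaves : MTree m → ℕ
  | .leaf => 1
  | .node c => ∑ j, (c j).leaves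

/-- The weight: the number of internal nodes. -/
def weight : MTree m → ℕ
  | .leaf => 0
  | .node c => 1 + ∑ j, (c j).weight

/-- `p.comp i q` is the partial composition `p ∘ᵢ q`: the tree obtained by
identifying leaf `i` of `p` (leaves numbered `1, …, leaves p` from left to
right) with the root of `q`. -/
def comp : MTree m → ℕ → MTree m → MTree m
  | .leaf, i, q => if i = 1 then q else .leaf
  | .node c, i, q => .node fun j => (c j).comp (i - ∑ k, if k < j then (c k).leaves else 0) q

/-- The path sequence: the list of root-to-leaf path lengths, with leaves taken
in left-to-right order. -/
def pathSeq : MTree m → List ℕ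
  | .leaf => [0]
  | .node c => (List.ofFn fun j => ((c j).pathSeq).map (· + 1)).flatten

/-- The basic `m`-ary tree: the unique tree with one internal node. -/
def basic (m : ℕ) : MTree m := .node fun _ => .leaf

end MTree

/-! The path sequence of `node c` is the concatenation of the children's path sequences, each
shifted by one. For `0 < m`, path sequences (even after an injective relabelling of their entries,
which absorbs the shifts) form a prefix code: a leaf gives `[0]`, an internal node a nonempty list
of positive entries. So the concatenation splits uniquely into the children's sequences. For
`m = 0` the only trees are `leaf` and `node Fin.elim0`, with sequences `[0]` and `[]`. -/

open Function

theorem eq_and_eq_of_flatten_ofFn_append_eq {α β : Type*} {code : α → List β} :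
    ∀ {n : ℕ} {a b : Fin n → α} {r s : List β},
      (∀ j b r s, code (a j) ++ r = code b ++ s → a j = b ∧ r = s) →
      (List.ofFn fun j => code (a j)).flatten ++ r
        = (List.ofFn fun j => code (b j)).flatten ++ s →
      a = b ∧ r = s
  | 0, a, b, r, s, _, h => ⟨Subsingleton.elim a b, by simpa using h⟩
  | n + 1, a, b, r, s, ha, h => by
    simp only [List.ofFn_succ, List.flatten_cons, List.append_assoc] at h
    obtain ⟨h0, htail⟩ := ha 0 _ _ _ h
    obtain ⟨hsucc, rfl⟩ := eq_and_eq_of_flatten_ofFn_append_eq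
      (fun j => ha j.succ) htail
    exact ⟨funext (Fin.cases h0 (congrFun hsucc)), rfl⟩

namespace MTree

variable {m : ℕ}

theorem pathSeq_node (c : Fin m → MTree m) :
    (node c).pathSeq = (List.ofFn fun j => (c j).pathSeq).flatten.map (· + 1) := by
  simp [pathSeq, List.map_flatten, List.map_ofFn, comp_def]

theorem pathSeq_ne_nil (hm : 0 < m) : ∀ t : MTree m, t.pathSeq ≠ []
  | leaf => List.cons_ne_nil _ _
  | node c => by
    simpa [pathSeq_node, List.flatten_eq_nil_iff] using
      ⟨⟨0, hm⟩, pathSeq_ne_nil hm (c ⟨0, hm⟩)⟩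

theorem exists_pathSeq_node_eq_succ_cons (hm : 0 < m) (c : Fin m → MTree m) :
    ∃ x l, (node c).pathSeq = (x + 1) :: l := by
  obtain ⟨x, l, hxl⟩ := List.exists_cons_of_ne_nil (pathSeq_ne_nil hm (node c))
  obtain ⟨y, -, rfl⟩ := List.mem_map.mp (pathSeq_node c ▸ hxl ▸ List.mem_cons_self)
  exact ⟨y, l, hxl⟩

theorem map_pathSeq_node_append_ne_leaf {β : Type*} (hm : 0 < m) {f : ℕ → β}
    (hf : Injective f) (c : Fin m → MTree m) (r s : List β) :
    (node c).pathSeq.map f ++ r ≠ (leaf : MTree m).pathSeq.map f ++ s := by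
  obtain ⟨x, l, hc⟩ := exists_pathSeq_node_eq_succ_cons hm c
  rw [hc]
  intro h
  simp only [pathSeq, List.map_cons, List.cons_append, List.cons.injEq] at h
  exact Nat.succ_ne_zero x (hf h.1)

theorem eq_and_eq_of_map_pathSeq_append_eq {β : Type*} (hm : 0 < m) (p : MTree m) :
    ∀ {f : ℕ → β}, Injective f → ∀ {q : MTree m} {r s : List β},
      p.pathSeq.map f ++ r = q.pathSeq.map f ++ s → p = q ∧ r = s := by
  induction p with
  | leaf =>
    intro f hf q r s h
    cases q with
    | leaf => simpa [pathSeq] using h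
    | node e => exact absurd h.symm (map_pathSeq_node_append_ne_leaf hm hf e s r)
  | node c ih =>
    intro f hf q r s h
    cases q with
    | leaf => exact absurd h (map_pathSeq_node_append_ne_leaf hm hf c r s)
    | node e =>
      have h' : (List.ofFn fun j => (c j).pathSeq.map (f ∘ (· + 1))).flatten ++ r
          = (List.ofFn fun j => (e j).pathSeq.map (f ∘ (· + 1))).flatten ++ s := by
        simpa [pathSeq_node, List.map_flatten, List.map_ofFn, comp_def] using h
      obtain ⟨rfl, rfl⟩ := eq_and_eq_of_flatten_ofFn_append_eq
        (code := fun t : MTree m => t.pathSeq.map (f ∘ (· + 1)))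
        (fun j _ _ _ => ih j (hf.comp (add_left_injective 1))) h'
      exact ⟨rfl, rfl⟩

theorem pathSeq_injective : Injective (pathSeq : MTree m → List ℕ) := by
  rcases Nat.eq_zero_or_pos m with rfl | hm
  · rintro (_ | c) (_ | e) h
    · rfl
    · simp [pathSeq] at h
    · simp [pathSeq] at h
    · exact congrArg node (Subsingleton.elim c e)
  · intro p q h
    exact (eq_and_eq_of_map_pathSeq_append_eq hm p injective_id
      (r := []) (s := []) (by simpa using h)).1

end MTree

theorem mary_tree_eq_iff_pathSeq_eq_general {m : ℕ} (p q : MTree m) :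
    p = q ↔ p.pathSeq = q.pathSeq :=
  MTree.pathSeq_injective.eq_iff.symm

/-- Two `m`-ary trees of the same arity are equal if and only if their path
sequences are equal. -/
theorem mary_tree_eq_iff_pathSeq_eq {m : ℕ} (p q : MTree m)
    (h : p.leaves = q.leaves) :
    p = q ↔ p.pathSeq = q.pathSeq :=
  mary_tree_eq_iff_pathSeq_eq_general p q
end

section
/- The number of ternary trees of weight w (w internal nodes, each node having 0 or 3 children) in which no internal node is the leftmost child of another internal node equals the Catalan number C_w = (1/(w+1))·C(2w, w). -/
/-- A ternary tree in which some internal node has an internal node as its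
first (leftmost) child; avoiding this pattern means avoiding `t ∘₁ t`. -/
def hasLeftPattern : MTree 3 → Prop
  | .leaf => False
  | .node c => (c 0 ≠ .leaf) ∨ ∃ j, hasLeftPattern (c j)

/-! The leftmost child of every internal node of a tree avoiding `t ∘₁ t` is a leaf, so such a
tree is an internal node carrying a leaf and two such trees: a binary tree with the same
internal nodes. Binary trees with `w` internal nodes are counted by `catalan w`. -/

theorem BinaryTree.natCard_numNodes_eq (n : ℕ) :
    Nat.card {t : BinaryTree Unit // t.numNodes = n} = catalan n := by
  rw [← treesOfNumNodesEq_card_eq_catalan, ← Nat.card_eq_finsetCard]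
  exact Nat.card_congr <| Equiv.subtypeEquivRight fun _ => mem_treesOfNumNodesEq.symm

namespace MTree

def ofBinaryTree : BinaryTree Unit → MTree 3
  | .nil => .leaf
  | .node _ l r => .node ![.leaf, ofBinaryTree l, ofBinaryTree r]

def toBinaryTree : MTree 3 → BinaryTree Unit
  | .leaf => .nil
  | .node c => .node () (toBinaryTree (c 1)) (toBinaryTree (c 2))

theorem weight_ofBinaryTree (t : BinaryTree Unit) : (ofBinaryTree t).weight = t.numNodes := by
  induction t with
  | nil => rfl
  | node _ l r ihl ihr =>
    simp only [ofBinaryTree, weight, Fin.sum_univ_three, Fin.isValue, Matrix.cons_val_zero,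
      Matrix.cons_val_one, Matrix.cons_val, ihl, ihr, BinaryTree.numNodes]
    omega

theorem not_hasLeftPattern_ofBinaryTree (t : BinaryTree Unit) :
    ¬ hasLeftPattern (ofBinaryTree t) := by
  induction t with
  | nil => simp [ofBinaryTree, hasLeftPattern]
  | node _ l r ihl ihr =>
    simp only [ofBinaryTree, hasLeftPattern, not_or, not_exists]
    refine ⟨by simp, fun j => ?_⟩
    fin_cases j <;> simp [hasLeftPattern, ihl, ihr]

theorem toBinaryTree_ofBinaryTree (t : BinaryTree Unit) : toBinaryTree (ofBinaryTree t) = t := by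
  induction t with
  | nil => rfl
  | node _ l r ihl ihr => simp [ofBinaryTree, toBinaryTree, ihl, ihr]

theorem ofBinaryTree_toBinaryTree {p : MTree 3} (h : ¬ hasLeftPattern p) :
    ofBinaryTree (toBinaryTree p) = p := by
  induction p with
  | leaf => rfl
  | node c ih =>
    simp only [hasLeftPattern, not_or, not_exists, ne_eq, not_not] at h
    obtain ⟨h_first_leaf, h_children⟩ := h
    simp only [toBinaryTree, ofBinaryTree, ih 1 (h_children 1), ih 2 (h_children 2)]
    congr 1
    funext j
    fin_cases j <;> simp [h_first_leaf]

def leftAvoidingEquivBinaryTree (w : ℕ) :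
    {p : MTree 3 // p.weight = w ∧ ¬ hasLeftPattern p} ≃
      {t : BinaryTree Unit // t.numNodes = w} where
  toFun p := ⟨toBinaryTree p, by
    rw [← weight_ofBinaryTree, ofBinaryTree_toBinaryTree p.2.2, p.2.1]⟩
  invFun t :=
    ⟨ofBinaryTree t, by rw [weight_ofBinaryTree, t.2], not_hasLeftPattern_ofBinaryTree t⟩
  left_inv p := Subtype.ext (ofBinaryTree_toBinaryTree p.2.2)
  right_inv t := Subtype.ext (toBinaryTree_ofBinaryTree t)

end MTree

/-- The number of ternary trees of weight `w` in which no internal node is the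
leftmost child of another internal node equals the Catalan number `C_w`. -/
theorem card_left_avoiding_ternary_trees (w : ℕ) :
    Nat.card {p : MTree 3 // p.weight = w ∧ ¬ hasLeftPattern p} = catalan w := by
  rw [Nat.card_congr (MTree.leftAvoidingEquivBinaryTree w), BinaryTree.natCard_numNodes_eq]
end
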